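/- If r ≥ 2 and 2 ≤ d₁ ≤ min{d₂, …, d_r}, then gpack(P_{d₁} ⊠ P_{d₂} ⊠ ⋯ ⊠ P_{d_r}) = d₂ · d₃ ⋯ d_r. -/

import Mathlib

open SimpleGraph

/-- A geodesic (shortest path) in `G`: a path whose length equals the distance
between its endpoints. -/
def IsGeodesic {V : Type*} (G : SimpleGraph V) {u v : V} (p : G.Walk u v) : Prop :=
  p.IsPath ∧ p.length = G.dist u v

/-- A maximal geodesic: a geodesic that is not contained as a subpath of any longer
geodesic, equivalently it cannot be extended at either end to a longer geodesic. -/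
def IsMaxGeodesic {V : Type*} (G : SimpleGraph V) {u v : V} (p : G.Walk u v) : Prop :=
  IsGeodesic G p ∧
  (∀ w (h : G.Adj w u), ¬ IsGeodesic G (SimpleGraph.Walk.cons h p)) ∧
  (∀ w (h : G.Adj v w), ¬ IsGeodesic G (p.concat h))

/-- A set of vertices that is the vertex set of some maximal geodesic of `G`. -/
def IsMaxGeodesicSet {V : Type*} (G : SimpleGraph V) (s : Set V) : Prop :=
  ∃ (u v : V) (p : G.Walk u v), IsMaxGeodesic G p ∧ s = {x | x ∈ p.support}

/-- A geodesic packing: a family of pairwise vertex-disjoint maximal geodesics. -/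
def IsGeodesicPacking {V : Type*} (G : SimpleGraph V) (P : Set (Set V)) : Prop :=
  (∀ s ∈ P, IsMaxGeodesicSet G s) ∧ P.Pairwise Disjoint

/-- The geodesic packing number `gpack(G)`. -/
noncomputable def gpackNum {V : Type*} (G : SimpleGraph V) : ℕ :=
  sSup {k | ∃ P : Finset (Set V), IsGeodesicPacking G ↑P ∧ P.card = k}

/-- A geodesic transversal: a vertex set hitting every maximal geodesic. -/
def IsGeodesicTransversal {V : Type*} (G : SimpleGraph V) (S : Set V) : Prop :=
  ∀ s, IsMaxGeodesicSet G s → (S ∩ s).Nonempty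

/-- The geodesic transversal number `gt(G)`. -/
noncomputable def gtransNum {V : Type*} (G : SimpleGraph V) : ℕ :=
  sInf {k | ∃ S : Finset V, IsGeodesicTransversal G ↑S ∧ S.card = k}

/-- The strong product of paths `P_{d 0} ⊠ ⋯ ⊠ P_{d (r-1)}` (a diagonal grid):
vertices are tuples, and distinct tuples are adjacent iff their coordinates differ
by at most `1` everywhere. -/
def strongGrid {r : ℕ} (d : Fin r → ℕ) : SimpleGraph (∀ i, Fin (d i)) where
  Adj x y := x ≠ y ∧ ∀ i, (x i : ℕ) ≤ (y i : ℕ) + 1 ∧ (y i : ℕ) ≤ (x i : ℕ) + 1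
  symm := ⟨by
    rintro x y ⟨hne, h⟩
    exact ⟨hne.symm, fun i => ⟨(h i).2, (h i).1⟩⟩⟩
  loopless := ⟨fun x h => h.1 rfl⟩

/-!
Distances in `strongGrid d` are Chebyshev distances. If a geodesic `u → v` has fewer than
`d 0 = min d i` vertices, choose a coordinate `i` with `|u i - v i| = dist u v`; since
`dist u v + 1 < d i`, one of `u`, `v` can be pushed one unit further from the other in that
coordinate, which extends the geodesic. So every maximal geodesic has at least `d 0` vertices,
and disjoint ones number at most `|V| / d 0 = ∏_{i ≠ 0} d i`. Conversely the lines parallel to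
axis `0` are that many disjoint maximal geodesics: moving an endpoint of such a line keeps it
within `max (d 0 - 1) 1 = d 0 - 1` of the other endpoint, so no extension is a geodesic.
-/

section Geodesic

variable {V : Type*} {G : SimpleGraph V} {u v : V}

theorem isGeodesic_iff_length_eq_dist (p : G.Walk u v) :
    IsGeodesic G p ↔ p.length = G.dist u v :=
  ⟨And.right, fun h => ⟨p.isPath_of_length_eq_dist h, h⟩⟩

theorem isMaxGeodesic_iff (p : G.Walk u v) :
    IsMaxGeodesic G p ↔ p.length = G.dist u v ∧
      (∀ w, G.Adj w u → G.dist w v ≠ G.dist u v + 1) ∧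
      (∀ w, G.Adj v w → G.dist u w ≠ G.dist u v + 1) := by
  simp only [IsMaxGeodesic, isGeodesic_iff_length_eq_dist, Walk.length_cons,
    Walk.length_concat]
  constructor <;> rintro ⟨hp, hleft, hright⟩ <;>
    exact ⟨hp, fun w h => by have := hleft w h; omega, fun w h => by have := hright w h; omega⟩

theorem SimpleGraph.Walk.IsPath.ncard_support {p : G.Walk u v} (hp : p.IsPath) :
    {x | x ∈ p.support}.ncard = p.length + 1 := by
  classical
  rw [← p.length_support, ← List.toFinset_card_of_nodup hp.support_nodup,
    ← Set.ncard_coe_finset]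
  simp

theorem IsGeodesicPacking.card_mul_le [Finite V] {P : Finset (Set V)}
    (hP : IsGeodesicPacking G P) {m : ℕ} (hm : ∀ s, IsMaxGeodesicSet G s → m ≤ s.ncard) :
    P.card * m ≤ Nat.card V :=
  calc P.card * m ≤ ∑ s ∈ P, s.ncard := by
        simpa using P.card_nsmul_le_sum Set.ncard m fun s hs => hm s (hP.1 s hs)
    _ = (⋃ s ∈ (P : Set (Set V)), s).ncard := by
        rw [(P.finite_toSet).ncard_biUnion (fun _ _ => Set.toFinite _) hP.2, finsum_mem_coe_finset]
    _ ≤ Nat.card V := Set.ncard_le_card _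

theorem gpackNum_eq {N : ℕ} (hle : ∀ P : Finset (Set V), IsGeodesicPacking G P → P.card ≤ N)
    (hex : ∃ P : Finset (Set V), IsGeodesicPacking G P ∧ P.card = N) : gpackNum G = N :=
  IsGreatest.csSup_eq ⟨hex, by rintro _ ⟨P, hP, rfl⟩; exact hle P hP⟩

end Geodesic

namespace strongGrid

variable {r : ℕ} {d : Fin r → ℕ} {x y : ∀ i, Fin (d i)}

theorem adj_iff : (strongGrid d).Adj x y ↔
    x ≠ y ∧ ∀ i, (x i : ℕ) ≤ y i + 1 ∧ (y i : ℕ) ≤ x i + 1 := Iff.rfl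

theorem coord_le_of_walk (p : (strongGrid d).Walk x y) (i : Fin r) :
    (x i : ℕ) ≤ y i + p.length ∧ (y i : ℕ) ≤ x i + p.length := by
  induction p with
  | nil => simp
  | cons h _ ih =>
    have := (adj_iff.1 h).2 i
    simp only [Walk.length_cons]
    omega

def stepToward (x y : ∀ i, Fin (d i)) : ∀ i, Fin (d i) := fun i =>
  ⟨max (x i - 1) (min (x i + 1) (y i)), by have := (x i).isLt; have := (y i).isLt; omega⟩

theorem adj_stepToward (h : x ≠ y) : (strongGrid d).Adj x (stepToward x y) := by
  refine ⟨fun hx => h (funext fun i => Fin.ext ?_), fun i => ?_⟩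
  · have := congrArg Fin.val (congrFun hx i)
    simp only [stepToward] at this
    omega
  · simp only [stepToward]
    omega

theorem exists_walk_fixing_coords (n : ℕ) (x y : ∀ i, Fin (d i))
    (h : ∀ i, (x i : ℕ) ≤ y i + n ∧ (y i : ℕ) ≤ x i + n) :
    ∃ p : (strongGrid d).Walk x y,
      p.length ≤ n ∧ ∀ z ∈ p.support, ∀ i, x i = y i → z i = x i := by
  induction n generalizing x with
  | zero =>
    obtain rfl : x = y := funext fun i => Fin.ext (by have := h i; omega)
    exact ⟨.nil, by simp⟩
  | succ n ih =>
    by_cases hxy : x = y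
    · subst hxy
      exact ⟨.nil, by simp⟩
    obtain ⟨p, hlen, hfix⟩ := ih (stepToward x y) fun i => by
      have := h i
      simp only [stepToward]
      omega
    refine ⟨.cons (adj_stepToward hxy) p, by simpa using hlen, fun z hz i hi => ?_⟩
    rw [Walk.support_cons, List.mem_cons] at hz
    rcases hz with rfl | hz
    · rfl
    · have hstep : stepToward x y i = x i := Fin.ext (by simp only [stepToward, hi]; omega)
      rw [hfix z hz i (hstep.trans hi), hstep]

theorem reachable (x y : ∀ i, Fin (d i)) : (strongGrid d).Reachable x y := by
  obtain ⟨p, -⟩ := exists_walk_fixing_coords (∑ i, d i) x y fun i => by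
    have := Finset.single_le_sum (fun j _ => Nat.zero_le (d j)) (Finset.mem_univ i)
    have := (x i).isLt
    have := (y i).isLt
    omega
  exact ⟨p⟩

theorem dist_le_iff {n : ℕ} : (strongGrid d).dist x y ≤ n ↔
    ∀ i, (x i : ℕ) ≤ y i + n ∧ (y i : ℕ) ≤ x i + n := by
  refine ⟨fun h i => ?_, fun h => ?_⟩
  · obtain ⟨p, hp⟩ := (reachable x y).exists_walk_length_eq_dist
    have := coord_le_of_walk p i
    omega
  · obtain ⟨p, hp, -⟩ := exists_walk_fixing_coords n x y h
    exact (dist_le p).trans hp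

theorem exists_geodesic_fixing_coords (x y : ∀ i, Fin (d i)) :
    ∃ p : (strongGrid d).Walk x y, IsGeodesic (strongGrid d) p ∧
      ∀ z ∈ p.support, ∀ i, x i = y i → z i = x i := by
  obtain ⟨p, hp, hfix⟩ := exists_walk_fixing_coords _ x y (dist_le_iff.1 le_rfl)
  exact ⟨p, (isGeodesic_iff_length_eq_dist p).2 (hp.antisymm (dist_le p)), hfix⟩

theorem exists_coord_eq_dist [NeZero r] (x y : ∀ i, Fin (d i)) :
    ∃ i, (x i : ℕ) = y i + (strongGrid d).dist x y ∨
      (y i : ℕ) = x i + (strongGrid d).dist x y := by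
  by_contra! h
  have hle := dist_le_iff.1 (le_refl ((strongGrid d).dist x y))
  have hpos : 0 < (strongGrid d).dist x y := by have := hle 0; have := h 0; omega
  have := (dist_le_iff (x := x) (y := y) (n := (strongGrid d).dist x y - 1)).2 fun i => by
    have := hle i; have := h i; omega
  omega

theorem exists_adj_dist_eq_add_one {i : Fin r} (a : Fin (d i))
    (hax : (x i : ℕ) ≤ a + 1 ∧ (a : ℕ) ≤ x i + 1)
    (hay : (a : ℕ) = y i + ((strongGrid d).dist x y + 1) ∨
      (y i : ℕ) = a + ((strongGrid d).dist x y + 1)) :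
    ∃ w, (strongGrid d).Adj w x ∧ (strongGrid d).dist w y = (strongGrid d).dist x y + 1 := by
  have hxy := dist_le_iff.1 (le_refl ((strongGrid d).dist x y))
  have hupd : ∀ k, k ≠ i → Function.update x i a k = x k := fun k hk =>
    Function.update_of_ne hk _ _
  refine ⟨Function.update x i a, ⟨fun h => ?_, fun k => ?_⟩, le_antisymm ?_ ?_⟩
  · have hval := congrArg Fin.val (congrFun h i)
    have := hxy i
    simp only [Function.update_self] at hval
    omega
  · rcases eq_or_ne k i with rfl | hk
    · simpa using hax.symm
    · simp [hupd k hk]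
  · refine dist_le_iff.2 fun k => ?_
    rcases eq_or_ne k i with rfl | hk
    · have := hxy k
      simp only [Function.update_self]
      omega
    · have := hxy k
      rw [hupd k hk]
      omega
  · by_contra! hlt
    have := (dist_le_iff.1 (Nat.le_of_lt_succ hlt)) i
    simp only [Function.update_self] at this
    omega

theorem exists_extension [NeZero r] (x y : ∀ i, Fin (d i))
    (hroom : ∀ i, (strongGrid d).dist x y + 1 < d i) :
    (∃ w, (strongGrid d).Adj w x ∧ (strongGrid d).dist w y = (strongGrid d).dist x y + 1) ∨
      ∃ w, (strongGrid d).Adj y w ∧ (strongGrid d).dist x w = (strongGrid d).dist x y + 1 := by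
  obtain ⟨i, hi⟩ := exists_coord_eq_dist x y
  wlog hxy : (x i : ℕ) = y i + (strongGrid d).dist x y generalizing x y
  · rw [SimpleGraph.dist_comm] at hroom hi hxy
    rcases this y x hroom (by omega) (by omega) with ⟨w, hw, hdist⟩ | ⟨w, hw, hdist⟩
    · exact .inr ⟨w, hw.symm, by rw [SimpleGraph.dist_comm, hdist, SimpleGraph.dist_comm]⟩
    · exact .inl ⟨w, hw.symm, by rw [SimpleGraph.dist_comm, hdist, SimpleGraph.dist_comm]⟩
  rcases lt_or_ge ((x i : ℕ) + 1) (d i) with hup | htop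
  · exact .inl <|
      exists_adj_dist_eq_add_one ⟨x i + 1, hup⟩ (by dsimp only; omega) (by dsimp only; omega)
  · right
    have := hroom i
    obtain ⟨w, hw, hdist⟩ := exists_adj_dist_eq_add_one (x := y) (y := x)
      ⟨y i - 1, (Nat.sub_le _ _).trans_lt (y i).isLt⟩ (by dsimp only; omega)
      (by rw [SimpleGraph.dist_comm]; dsimp only; omega)
    exact ⟨w, hw.symm, by rw [SimpleGraph.dist_comm, hdist, SimpleGraph.dist_comm]⟩

theorem le_ncard_of_isMaxGeodesicSet {j : Fin r} (hmin : ∀ i, d j ≤ d i)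
    {s : Set (∀ i, Fin (d i))} (hs : IsMaxGeodesicSet (strongGrid d) s) : d j ≤ s.ncard := by
  have : NeZero r := ⟨j.pos.ne'⟩
  obtain ⟨u, v, p, hp, rfl⟩ := hs
  rw [hp.1.1.ncard_support]
  obtain ⟨hlen, hleft, hright⟩ := (isMaxGeodesic_iff p).1 hp
  by_contra! hshort
  rcases exists_extension u v fun i => by have := hmin i; omega with ⟨w, h, hw⟩ | ⟨w, h, hw⟩
  · exact hleft w h hw
  · exact hright w h hw

theorem exists_isMaxGeodesic_tail_eq {d : Fin (r + 1) → ℕ} (hd : 2 ≤ d 0)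
    (b : ∀ i : Fin r, Fin (d i.succ)) :
    ∃ (u v : ∀ i, Fin (d i)) (p : (strongGrid d).Walk u v),
      IsMaxGeodesic (strongGrid d) p ∧ ∀ z ∈ p.support, Fin.tail z = b := by
  let u : ∀ i, Fin (d i) := Fin.cons ⟨0, by omega⟩ b
  let v : ∀ i, Fin (d i) := Fin.cons ⟨d 0 - 1, by omega⟩ b
  obtain ⟨p, hp, hfix⟩ := exists_geodesic_fixing_coords u v
  have huv : ∀ i : Fin r, u i.succ = v i.succ := by simp [u, v]
  have hdist_le : ∀ w x : ∀ i, Fin (d i),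
      (∀ i : Fin r, (w i.succ : ℕ) ≤ x i.succ + 1 ∧ (x i.succ : ℕ) ≤ w i.succ + 1) →
      (strongGrid d).dist w x ≤ d 0 - 1 := fun w x h => dist_le_iff.2 fun i => by
    refine Fin.cases ?_ (fun i => ?_) i
    · have := (w 0).isLt; have := (x 0).isLt; omega
    · have := h i; omega
  have hdist : d 0 - 1 ≤ (strongGrid d).dist u v := by
    have := (dist_le_iff.1 (le_refl ((strongGrid d).dist u v)) 0).2
    simpa [u, v] using this
  refine ⟨u, v, p, (isMaxGeodesic_iff p).2 ⟨hp.2, fun w h => ?_, fun w h => ?_⟩,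
    fun z hz => funext fun i => ?_⟩
  · have := hdist_le w v fun i => huv i ▸ (adj_iff.1 h).2 i.succ
    omega
  · have := hdist_le u w fun i => (huv i).symm ▸ (adj_iff.1 h).2 i.succ
    omega
  · simpa [u, Fin.tail] using hfix z hz i.succ (huv i)

theorem exists_isGeodesicPacking_card_eq {d : Fin (r + 1) → ℕ} (hd : 2 ≤ d 0) :
    ∃ P : Finset (Set (∀ i, Fin (d i))),
      IsGeodesicPacking (strongGrid d) P ∧ P.card = ∏ i : Fin r, d i.succ := by
  classical
  choose u v p hp htail using exists_isMaxGeodesic_tail_eq hd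
  let s b : Set (∀ i, Fin (d i)) := {z | z ∈ (p b).support}
  have hdisj : ∀ b b', b ≠ b' → Disjoint (s b) (s b') := fun b b' hne =>
    Set.disjoint_left.2 fun z hz hz' => hne ((htail b z hz).symm.trans (htail b' z hz'))
  have hinj : Function.Injective s := fun b b' h => by
    by_contra hne
    have hub : u b ∈ s b := (p b).start_mem_support
    exact Set.disjoint_left.1 (hdisj b b' hne) hub (h ▸ hub)
  refine ⟨Finset.univ.image s, ⟨?_, ?_⟩, ?_⟩
  · simp only [Finset.coe_image, Finset.coe_univ, Set.image_univ]
    rintro _ ⟨b, rfl⟩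
    exact ⟨u b, v b, p b, hp b, rfl⟩
  · simp only [Finset.coe_image, Finset.coe_univ, Set.image_univ]
    rintro _ ⟨b, rfl⟩ _ ⟨b', rfl⟩ hne
    exact hdisj b b' (ne_of_apply_ne s hne)
  · simp [Finset.card_image_of_injective _ hinj]

end strongGrid

theorem gpack_strongGrid (r : ℕ) (d : Fin (r + 2) → ℕ) (h1 : 2 ≤ d 0)
    (hmin : ∀ i, d 0 ≤ d i) :
    gpackNum (strongGrid d) = ∏ i ∈ Finset.univ.erase (0 : Fin (r + 2)), d i := by
  have hcard : Nat.card (∀ i, Fin (d i)) = d 0 * ∏ i : Fin (r + 1), d i.succ := by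
    simp [Fin.prod_univ_succ]
  have hlines :
      ∏ i ∈ Finset.univ.erase (0 : Fin (r + 2)), d i = ∏ i : Fin (r + 1), d i.succ :=
    mul_left_cancel₀ (by omega : d 0 ≠ 0) <| by
      rw [Finset.mul_prod_erase _ _ (Finset.mem_univ 0), Fin.prod_univ_succ]
  rw [hlines]
  refine gpackNum_eq (fun P hP => ?_) (strongGrid.exists_isGeodesicPacking_card_eq h1)
  have := hP.card_mul_le fun s hs => strongGrid.le_ncard_of_isMaxGeodesicSet hmin hs
  rw [hcard, mul_comm] at this
  exact Nat.le_of_mul_le_mul_left this (by omega)
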